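/- Let G be a graph with a universal vertex u such that G − u has at least one isolated vertex. Then ρ(G) = ρ(G − u) + 1, where ρ denotes the maximum double neighborhood number. Moreover, if S is a maximum double neighborhood sequence of G − u, then S followed by u is a maximum double neighborhood sequence of G. -/

import Mathlib

open SimpleGraph

variable {V : Type*}

/-- The closed neighborhood of a vertex. -/
def cnbr (G : SimpleGraph V) (v : V) : Set V := insert v (G.neighborSet v)

/-- The number of vertices in the list `l` that dominate `u` (i.e. whose closed
neighborhood contains `u`). -/
noncomputable def domCount (G : SimpleGraph V) (u : V) (l : List V) : ℕ :=
  {w | w ∈ l ∧ u ∈ cnbr G w}.ncard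

/-- A double neighborhood sequence (DNS): a sequence of distinct vertices in which each
vertex dominates some vertex dominated at most once by its predecessors. -/
def IsDNS (G : SimpleGraph V) (l : List V) : Prop :=
  l.Nodup ∧ ∀ i : Fin l.length, ∃ u ∈ cnbr G (l.get i), domCount G u (l.take i) ≤ 1

/-- A double dominating sequence (DDS): a DNS whose underlying set is doubly dominating. -/
def IsDDS (G : SimpleGraph V) (l : List V) : Prop :=
  IsDNS G l ∧ ∀ v, 2 ≤ domCount G v l

/-- The Grundy double domination number: maximum length of a DDS. -/
noncomputable def gddn (G : SimpleGraph V) : ℕ :=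
  sSup {n | ∃ l : List V, IsDDS G l ∧ l.length = n}

/-- The maximum double neighborhood number: maximum length of a DNS. -/
noncomputable def mdnn (G : SimpleGraph V) : ℕ :=
  sSup {n | ∃ l : List V, IsDNS G l ∧ l.length = n}

/-- A legal (Grundy domination) sequence. -/
def IsLegal (G : SimpleGraph V) (l : List V) : Prop :=
  l.Nodup ∧ ∀ i : Fin l.length, ∃ u ∈ cnbr G (l.get i), domCount G u (l.take i) = 0

/-- A dominating sequence: legal sequence whose underlying set dominates. -/
def IsDomSeq (G : SimpleGraph V) (l : List V) : Prop :=
  IsLegal G l ∧ ∀ v, 1 ≤ domCount G v l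

/-- The Grundy domination number: maximum length of a dominating sequence. -/
noncomputable def grundy (G : SimpleGraph V) : ℕ :=
  sSup {n | ∃ l : List V, IsDomSeq G l ∧ l.length = n}

/-- The double domination number: minimum size of a double dominating set. -/
noncomputable def ddomNum (G : SimpleGraph V) : ℕ :=
  sInf {n | ∃ D : Set V, (∀ v, 2 ≤ {w | w ∈ D ∧ v ∈ cnbr G w}.ncard) ∧ D.ncard = n}

/-! Appending `u` to a DNS of `G - u` keeps it a DNS, since `u` dominates the isolated vertex `a`
of `G - u`, which only `a` itself has dominated so far. Conversely, deleting `u` from a DNS of `G`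
leaves a DNS of `G - u`: subsequences of a DNS are DNSs, and a vertex whose witness was `u` has at
most one predecessor, because every vertex dominates `u`, so it is its own witness in `G - u`. -/

variable {W : Type*}

lemma mem_cnbr {G : SimpleGraph V} {v w : V} : v ∈ cnbr G w ↔ v = w ∨ G.Adj w v := by
  simp [cnbr]

lemma mem_cnbr_self (G : SimpleGraph V) (v : V) : v ∈ cnbr G v := Set.mem_insert _ _

lemma SimpleGraph.Embedding.map_mem_cnbr_iff {H : SimpleGraph W} {G : SimpleGraph V}
    (f : H ↪g G) {v w : W} : f v ∈ cnbr G (f w) ↔ v ∈ cnbr H w := by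
  simp only [mem_cnbr, f.injective.eq_iff, f.map_adj_iff]

lemma domCount_le_length (G : SimpleGraph V) (v : V) (l : List V) :
    domCount G v l ≤ l.length := by
  classical
  calc domCount G v l ≤ (l.toFinset : Set V).ncard :=
        Set.ncard_le_ncard (fun w hw => by simpa using hw.1) l.toFinset.finite_toSet
    _ = l.toFinset.card := Set.ncard_coe_finset _
    _ ≤ l.length := l.toFinset_card_le

lemma domCount_mono (G : SimpleGraph V) (v : V) {l₁ l₂ : List V} (h : l₁ ⊆ l₂) :
    domCount G v l₁ ≤ domCount G v l₂ :=
  Set.ncard_le_ncard (fun _ hw => ⟨h hw.1, hw.2⟩)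
    (l₂.finite_toSet.subset fun _ hw => hw.1)

lemma domCount_of_forall_adj {G : SimpleGraph V} {u : V} (huniv : ∀ w, w ≠ u → G.Adj u w)
    {l : List V} (hl : l.Nodup) : domCount G u l = l.length := by
  classical
  have hdom : {w | w ∈ l ∧ u ∈ cnbr G w} = (l.toFinset : Set V) := by
    ext w
    simp only [Set.mem_ofPred_eq, List.coe_toFinset, and_iff_left_iff_imp]
    intro _
    obtain rfl | hwu := eq_or_ne w u
    · exact mem_cnbr_self G w
    · exact mem_cnbr.mpr (Or.inr (huniv w hwu).symm)
  rw [domCount, hdom, Set.ncard_coe_finset, List.toFinset_card_of_nodup hl]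

lemma domCount_le_one_of_forall_not_adj {G : SimpleGraph V} {a : V} (ha : ∀ b, ¬ G.Adj a b)
    (l : List V) : domCount G a l ≤ 1 := by
  have hself : {w | w ∈ l ∧ a ∈ cnbr G w} ⊆ {a} := fun w hw =>
    (mem_cnbr.mp hw.2).elim Eq.symm fun hadj => (ha w hadj.symm).elim
  exact (Set.ncard_le_ncard hself (Set.finite_singleton a)).trans (Set.ncard_singleton a).le

lemma SimpleGraph.Embedding.domCount_map {H : SimpleGraph W} {G : SimpleGraph V}
    (f : H ↪g G) (v : W) (l : List W) : domCount G (f v) (l.map f) = domCount H v l := by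
  have himage : {w | w ∈ l.map f ∧ f v ∈ cnbr G w} = f '' {w | w ∈ l ∧ v ∈ cnbr H w} := by
    ext w
    simp only [Set.mem_image, Set.mem_ofPred_eq, List.mem_map]
    constructor
    · rintro ⟨⟨w', hw', rfl⟩, hcn⟩
      exact ⟨w', ⟨hw', f.map_mem_cnbr_iff.mp hcn⟩, rfl⟩
    · rintro ⟨w', ⟨hw', hcn⟩, rfl⟩
      exact ⟨⟨w', hw', rfl⟩, f.map_mem_cnbr_iff.mpr hcn⟩
  rw [domCount, domCount, himage, Set.ncard_image_of_injective _ f.injective]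

lemma isDNS_iff {G : SimpleGraph V} {l : List V} :
    IsDNS G l ↔ l.Nodup ∧
      ∀ p x s, l = p ++ x :: s → ∃ w ∈ cnbr G x, domCount G w p ≤ 1 := by
  refine and_congr_right fun _ => ⟨fun h p x s hl => ?_, fun h i => ?_⟩
  · subst hl
    simpa using h ⟨p.length, by simp⟩
  · have hsplit := (List.take_append_drop i l).symm
    rw [List.drop_eq_getElem_cons i.2] at hsplit
    simpa using h _ _ _ hsplit

lemma IsDNS.exists_mem_cnbr {G : SimpleGraph V} {l p s : List V} {x : V} (hl : IsDNS G l)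
    (hsplit : l = p ++ x :: s) : ∃ w ∈ cnbr G x, domCount G w p ≤ 1 :=
  (isDNS_iff.mp hl).2 p x s hsplit

lemma isDNS_nil (G : SimpleGraph V) : IsDNS G [] :=
  isDNS_iff.mpr ⟨List.nodup_nil, fun p x s h => by simp at h⟩

lemma IsDNS.sublist {G : SimpleGraph V} {l l' : List V} (hl : IsDNS G l) (h : l'.Sublist l) :
    IsDNS G l' := by
  refine isDNS_iff.mpr ⟨hl.1.sublist h, fun p x s hsplit => ?_⟩
  obtain ⟨t, r, hl_split, hpt⟩ : ∃ t r, l = t ++ x :: r ∧ p.Sublist t := by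
    subst hsplit
    obtain ⟨r₁, r₂, rfl, hp, hxs⟩ := List.append_sublist_iff.mp h
    obtain ⟨r₃, r₄, rfl, hx, -⟩ := List.cons_sublist_iff.mp hxs
    obtain ⟨t₁, t₂, rfl⟩ := List.mem_iff_append.mp hx
    exact ⟨r₁ ++ t₁, t₂ ++ r₄, by simp, hp.trans (List.sublist_append_left _ _)⟩
  obtain ⟨w, hw, hcount⟩ := hl.exists_mem_cnbr hl_split
  exact ⟨w, hw, (domCount_mono G w hpt.subset).trans hcount⟩

lemma IsDNS.append_singleton {G : SimpleGraph V} {l : List V} {x w : V} (hl : IsDNS G l)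
    (hx : x ∉ l) (hw : w ∈ cnbr G x) (hcount : domCount G w l ≤ 1) : IsDNS G (l ++ [x]) := by
  refine isDNS_iff.mpr ⟨?_, fun p y s hsplit => ?_⟩
  · simpa [List.nodup_append] using ⟨hl.1, fun y hy hyx => hx (hyx ▸ hy)⟩
  rcases List.eq_nil_or_concat s with rfl | ⟨s', z, rfl⟩
  · obtain ⟨rfl, hxy⟩ := List.append_inj' hsplit rfl
    obtain rfl : x = y := by simpa using hxy
    exact ⟨w, hw, hcount⟩
  · have hsplit' : l ++ [x] = (p ++ y :: s') ++ [z] := by simpa using hsplit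
    exact hl.exists_mem_cnbr (List.append_inj' hsplit' rfl).1

lemma IsDNS.map {H : SimpleGraph W} {G : SimpleGraph V} (f : H ↪g G) {l : List W}
    (hl : IsDNS H l) : IsDNS G (l.map f) := by
  refine isDNS_iff.mpr ⟨hl.1.map f.injective, fun p y s hsplit => ?_⟩
  obtain ⟨p', ys', rfl, rfl, hys⟩ := List.map_eq_append_iff.mp hsplit
  obtain ⟨y', s', rfl, rfl, -⟩ := List.map_eq_cons_iff.mp hys
  obtain ⟨w, hw, hcount⟩ := hl.exists_mem_cnbr rfl
  exact ⟨f w, f.map_mem_cnbr_iff.mpr hw, by rwa [f.domCount_map]⟩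

lemma IsDNS.of_map_val {G : SimpleGraph V} {u : V} (huniv : ∀ w, w ≠ u → G.Adj u w)
    {l : List {w : V | w ≠ u}} (hl : IsDNS G (l.map Subtype.val)) :
    IsDNS (G.induce {w : V | w ≠ u}) l := by
  have hnodup : l.Nodup := hl.1.of_map _
  refine isDNS_iff.mpr ⟨hnodup, fun p x s hsplit => ?_⟩
  obtain ⟨w, hw, hcount⟩ :=
    hl.exists_mem_cnbr (p := p.map Subtype.val) (x := x.1) (s := s.map Subtype.val)
      (by simp [hsplit])
  by_cases hwu : w = u
  · subst hwu
    have hp : p.Nodup := (hsplit ▸ hnodup).sublist (List.sublist_append_left _ _)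
    rw [domCount_of_forall_adj huniv (hp.map Subtype.val_injective), List.length_map] at hcount
    exact ⟨x, mem_cnbr_self _ x, (domCount_le_length _ _ _).trans hcount⟩
  · exact ⟨⟨w, hwu⟩, (Embedding.induce _).map_mem_cnbr_iff.mp hw,
      ((Embedding.induce _).domCount_map _ p).symm.trans_le hcount⟩

lemma bddAbove_isDNS_length [Finite V] (G : SimpleGraph V) :
    BddAbove {n | ∃ l : List V, IsDNS G l ∧ l.length = n} := by
  have := Fintype.ofFinite V
  exact ⟨Fintype.card V, by rintro n ⟨l, hl, rfl⟩; exact hl.1.length_le_card⟩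

lemma IsDNS.length_le_mdnn [Finite V] {G : SimpleGraph V} {l : List V} (hl : IsDNS G l) :
    l.length ≤ mdnn G :=
  le_csSup (bddAbove_isDNS_length G) ⟨l, hl, rfl⟩

lemma exists_isDNS_length_eq_mdnn [Finite V] (G : SimpleGraph V) :
    ∃ l : List V, IsDNS G l ∧ l.length = mdnn G := by
  refine Nat.sSup_mem ?_ (bddAbove_isDNS_length G)
  exact ⟨0, [], isDNS_nil G, rfl⟩

lemma IsDNS.append_of_isolated {G : SimpleGraph V} {u : V} (huniv : ∀ w, w ≠ u → G.Adj u w)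
    {a : {w : V | w ≠ u}} (ha : ∀ b, ¬ (G.induce {w : V | w ≠ u}).Adj a b)
    {l : List {w : V | w ≠ u}} (hl : IsDNS (G.induce {w : V | w ≠ u}) l) :
    IsDNS G (l.map Subtype.val ++ [u]) := by
  have hu : u ∉ l.map Subtype.val := by simp
  have hcount : domCount G a (l.map Subtype.val) ≤ 1 :=
    ((Embedding.induce _).domCount_map a l).trans_le (domCount_le_one_of_forall_not_adj ha l)
  exact (hl.map (Embedding.induce _)).append_singleton hu (mem_cnbr.mpr (Or.inr (huniv a a.2)))
    hcount

/-- if u is universal and G−u has an isolated vertex, then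
ρ(G) = ρ(G−u) + 1, and appending u to any MDNS of G−u gives a MDNS of G. -/
theorem stmt11 [Fintype V] (G : SimpleGraph V) (u : V)
    (huniv : ∀ w, w ≠ u → G.Adj u w)
    (hiso : ∃ a : ({w : V | w ≠ u} : Set V), ∀ b,
      ¬ (G.induce {w : V | w ≠ u}).Adj a b) :
    mdnn G = mdnn (G.induce {w : V | w ≠ u}) + 1 ∧
    ∀ l : List ({w : V | w ≠ u} : Set V),
      IsDNS (G.induce {w : V | w ≠ u}) l → l.length = mdnn (G.induce {w : V | w ≠ u}) →
      IsDNS G (l.map Subtype.val ++ [u]) ∧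
      (l.map Subtype.val ++ [u]).length = mdnn G := by
  classical
  obtain ⟨a, ha⟩ := hiso
  have hle : mdnn (G.induce {w : V | w ≠ u}) + 1 ≤ mdnn G := by
    obtain ⟨l, hl, hlen⟩ := exists_isDNS_length_eq_mdnn (G.induce {w : V | w ≠ u})
    simpa [hlen] using (hl.append_of_isolated huniv ha).length_le_mdnn
  have hge : mdnn G ≤ mdnn (G.induce {w : V | w ≠ u}) + 1 := by
    obtain ⟨L, hL, hlen⟩ := exists_isDNS_length_eq_mdnn G
    have hne : ∀ v ∈ L.erase u, v ≠ u := fun v hv => (hL.1.mem_erase_iff.mp hv).1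
    have herase : IsDNS G (L.erase u) := hL.sublist L.erase_sublist
    have hlen_erase : L.length ≤ (L.erase u).length + 1 := by
      rw [List.length_erase]; split_ifs <;> omega
    lift L.erase u to List {w : V | w ≠ u} using hne with l
    have := (herase.of_map_val huniv).length_le_mdnn
    rw [List.length_map] at hlen_erase
    omega
  have hmdnn := le_antisymm hge hle
  refine ⟨hmdnn, fun l hl hlen => ⟨hl.append_of_isolated huniv ha, ?_⟩⟩
  simp [hlen, hmdnn]
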